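/- arXiv:0911.0824 — 4 statements merged into one kernel-verified Lean document; each statement's English description precedes it below -/
import Mathlib

section
/- Let W be a Coxeter group with diagram automorphism θ such that θ commutes with no reflection of W and every element of W(θ) = {u : θ(u) = u⁻¹} has even length. Then for every u ∈ W(θ) and every simple reflection sᵢ, the length of sᵢ·u·θ(sᵢ) equals ℓ(u) + 2 or ℓ(u) − 2; in particular sᵢ·u·θ(sᵢ) ≠ u. -/
/-!
If `sᵢ u θ(sᵢ) = u`, then `sᵢ u = u θ(sᵢ)` is again a twisted involution, of length `ℓ(u) ± 1`,
against the parity hypothesis. Otherwise `ℓ(sᵢ u) = ℓ(u θ(sᵢ))`, because `u θ(sᵢ) = θ(sᵢ u)⁻¹` and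
`θ` preserves length, and a consequence of the exchange condition (for simple `s, t` with
`ℓ(s w) > ℓ(w)` and `ℓ(w t) > ℓ(w)`, either `s w = w t` or `ℓ(s w t) = ℓ(w) + 2`) forces the
length to move by two. The exchange condition itself comes from Tits' sign representation of `W`
on `W × ZMod 2`.
-/

theorem Equiv.Perm.pow_apply_of_apply_eq_conj {G A : Type*} [Group G] [AddCommMonoid A]
    (σ : Equiv.Perm (G × A)) (g : G) (f : G → A)
    (hσ : ∀ t z, σ (t, z) = (g * t * g⁻¹, z + f t)) (n : ℕ) (t : G) (z : A) :
    (σ ^ n) (t, z) =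
      (g ^ n * t * (g ^ n)⁻¹, z + ∑ k ∈ Finset.range n, f (g ^ k * t * (g ^ k)⁻¹)) := by
  induction n generalizing t z with
  | zero => simp
  | succ n ih =>
    rw [pow_succ, Equiv.Perm.mul_apply, hσ, ih, Finset.sum_range_succ']
    simp only [pow_succ, mul_inv_rev, mul_assoc, pow_zero, one_mul, inv_one, mul_one]
    rw [add_comm (∑ _ ∈ _, _), add_assoc]

theorem Finset.sum_range_two_mul {A : Type*} [AddCommMonoid A] (f : ℕ → A) (m : ℕ) :
    ∑ r ∈ range (2 * m), f r = ∑ k ∈ range m, (f (2 * k) + f (2 * k + 1)) := by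
  induction m with
  | zero => simp
  | succ m ih =>
    rw [mul_add, mul_one, sum_range_succ, sum_range_succ, sum_range_succ, ih, add_assoc]

theorem mul_mul_inv_eq_iff {G : Type*} [Group G] (g t x : G) :
    g * t * g⁻¹ = x ↔ t = g⁻¹ * x * g := by
  rw [mul_inv_eq_iff_eq_mul, mul_assoc g⁻¹, eq_inv_mul_iff_mul_eq]

namespace CoxeterSystem

open Finset

variable {B W : Type*} [Group W] {M : CoxeterMatrix B} (cs : CoxeterSystem M W)

local prefix:100 "s" => cs.simple
local prefix:100 "π" => cs.wordProd
local prefix:100 "ℓ" => cs.length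

theorem simple_mul_mul_simple_eq_iff (i : B) (t x : W) :
    s i * t * s i = x ↔ t = s i * x * s i := by
  constructor <;> rintro rfl <;>
    simp only [mul_assoc, cs.simple_mul_simple_self, mul_one, cs.simple_mul_simple_cancel_left]

theorem simple_inv_pow_mul_simple (i j : B) (k : ℕ) :
    ((s i * s j) ^ k)⁻¹ * s j = s j * (s i * s j) ^ k := by
  have h : (s i * s j)⁻¹ = s j * (s i * s j) * (s j)⁻¹ := by
    simp only [mul_inv_rev, cs.inv_simple, mul_assoc, cs.simple_mul_simple_self, mul_one]
  rw [← inv_pow, h, conj_pow, cs.inv_simple, mul_assoc, cs.simple_mul_simple_self, mul_one]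

section SignRepresentation

variable [DecidableEq W]

/-- The map `(t, ε) ↦ (sᵢ t sᵢ, ε · (-1)^[t = sᵢ])` on `W × {±1}`, with the sign written
additively. -/
def simpleSignPerm (i : B) : Equiv.Perm (W × ZMod 2) :=
  Function.Involutive.toPerm (fun p ↦ (s i * p.1 * s i, p.2 + if p.1 = s i then 1 else 0)) <| by
    rintro ⟨t, z⟩
    simp only [simple_mul_mul_simple_eq_iff, ← mul_assoc, cs.simple_mul_simple_self, one_mul,
      mul_assoc t, mul_one, add_assoc]
    split_ifs <;> simp [ZModModule.add_self]

theorem simpleSignPerm_apply (i : B) (t : W) (z : ZMod 2) :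
    cs.simpleSignPerm i (t, z) = (s i * t * s i, z + if t = s i then 1 else 0) := rfl

theorem simpleSignPerm_mul_apply (i j : B) (t : W) (z : ZMod 2) :
    (cs.simpleSignPerm i * cs.simpleSignPerm j) (t, z) =
      ((s i * s j) * t * (s i * s j)⁻¹,
        z + ((if t = s j then 1 else 0) + if t = s j * (s i * s j) then 1 else 0)) := by
  simp only [Equiv.Perm.mul_apply, simpleSignPerm_apply, simple_mul_mul_simple_eq_iff]
  simp only [mul_inv_rev, cs.inv_simple, mul_assoc, add_assoc]

theorem isLiftable_simpleSignPerm : M.IsLiftable cs.simpleSignPerm := by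
  intro i j
  ext ⟨t, z⟩ : 1
  rw [Equiv.Perm.pow_apply_of_apply_eq_conj _ _ _ (cs.simpleSignPerm_mul_apply i j),
    cs.simple_mul_simple_pow]
  set g := s i * s j
  have hconj (k e : ℕ) : g ^ k * t * (g ^ k)⁻¹ = s j * g ^ e ↔ t = s j * g ^ (2 * k + e) := by
    have h : s j * g ^ (2 * k + e) = (g ^ k)⁻¹ * (s j * g ^ e) * g ^ k := by
      rw [← mul_assoc, cs.simple_inv_pow_mul_simple, mul_assoc, mul_assoc, ← pow_add, ← pow_add,
        two_mul]
      congr 2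
      omega
    rw [h, mul_mul_inv_eq_iff]
  have hconj₀ (k : ℕ) : g ^ k * t * (g ^ k)⁻¹ = s j ↔ t = s j * g ^ (2 * k) := by
    simpa using hconj k 0
  have hconj₁ (k : ℕ) : g ^ k * t * (g ^ k)⁻¹ = s j * g ↔ t = s j * g ^ (2 * k + 1) := by
    simpa using hconj k 1
  -- The sum counts the `r < 2 m` with `t = s j * g ^ r`; as `g ^ m = 1`, each such `t` is
  -- counted twice.
  simp only [hconj₀, hconj₁]
  rw [← sum_range_two_mul (fun r ↦ if t = s j * g ^ r then 1 else 0), two_mul, sum_range_add]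
  simp only [pow_add, show g ^ M i j = 1 from cs.simple_mul_simple_pow i j, one_mul,
    CharTwo.add_self_eq_zero, add_zero, inv_one, mul_one, Equiv.Perm.one_apply]

def signRep : W →* Equiv.Perm (W × ZMod 2) :=
  cs.lift ⟨cs.simpleSignPerm, cs.isLiftable_simpleSignPerm⟩

theorem signRep_simple (i : B) : cs.signRep (s i) = cs.simpleSignPerm i :=
  cs.lift_apply_simple cs.isLiftable_simpleSignPerm i

theorem signRep_wordProd (ω : List B) (t : W) (z : ZMod 2) :
    cs.signRep (π ω) (t, z) =
      (π ω * t * (π ω)⁻¹, z + ((cs.rightInvSeq ω).count t : ZMod 2)) := by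
  induction ω generalizing t z with
  | nil => simp [rightInvSeq]
  | cons i ω ih =>
    rw [cs.wordProd_cons, map_mul, Equiv.Perm.mul_apply, ih, signRep_simple, simpleSignPerm_apply,
      rightInvSeq, List.count_cons]
    simp only [mul_mul_inv_eq_iff, beq_iff_eq, eq_comm (b := t)]
    push_cast
    simp only [mul_inv_rev, cs.inv_simple, mul_assoc, add_assoc]

def inversionParity (w t : W) : ZMod 2 := (cs.signRep w (t, 0)).2

theorem signRep_apply (w t : W) (z : ZMod 2) :
    cs.signRep w (t, z) = (w * t * w⁻¹, z + cs.inversionParity w t) := by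
  obtain ⟨ω, rfl⟩ := cs.wordProd_surjective w
  rw [inversionParity, signRep_wordProd, signRep_wordProd, zero_add]

theorem inversionParity_wordProd (ω : List B) (t : W) :
    cs.inversionParity (π ω) t = (cs.rightInvSeq ω).count t := by
  rw [inversionParity, signRep_wordProd, zero_add]

theorem mem_rightInvSeq_of_inversionParity {ω : List B} {t : W}
    (h : cs.inversionParity (π ω) t = 1) : t ∈ cs.rightInvSeq ω := by
  rw [inversionParity_wordProd] at h
  exact List.count_pos_iff.mp (Nat.pos_of_ne_zero fun h0 ↦ by simp [h0] at h)

theorem signRep_apply_self {t : W} (ht : cs.IsReflection t) (z : ZMod 2) :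
    cs.signRep t (t, z) = (t, z + 1) := by
  obtain ⟨v, j, rfl⟩ := ht
  have hconj : v⁻¹ * (v * s j * v⁻¹) * v⁻¹⁻¹ = s j := by group
  have hcancel : cs.inversionParity v⁻¹ (v * s j * v⁻¹) + cs.inversionParity v (s j) = 0 := by
    have h : cs.signRep v (cs.signRep v⁻¹ (v * s j * v⁻¹, 0)) = (v * s j * v⁻¹, 0) := by
      rw [← Equiv.Perm.mul_apply, ← map_mul, mul_inv_cancel, map_one, Equiv.Perm.one_apply]
    rw [cs.signRep_apply v⁻¹, hconj, signRep_apply, Prod.mk.injEq, zero_add] at h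
    exact h.2
  rw [map_mul, map_mul, Equiv.Perm.mul_apply, Equiv.Perm.mul_apply, cs.signRep_apply v⁻¹, hconj,
    signRep_simple, simpleSignPerm_apply, if_pos rfl, cs.simple_mul_simple_self, one_mul,
    signRep_apply, Prod.mk.injEq]
  exact ⟨rfl, by linear_combination hcancel⟩

theorem inversionParity_mul_self {t : W} (ht : cs.IsReflection t) (w : W) :
    cs.inversionParity (w * t) t = cs.inversionParity w t + 1 := by
  rw [inversionParity, map_mul, Equiv.Perm.mul_apply, cs.signRep_apply_self ht, signRep_apply,
    zero_add, add_comm]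

theorem inversionParity_eq_one_of_isRightInversion {w t : W} (h : cs.IsRightInversion w t) :
    cs.inversionParity w t = 1 := by
  by_contra hne
  have hpar : cs.inversionParity (w * t) t = 1 := by
    rw [inversionParity_mul_self cs h.1, (by decide : ∀ x : ZMod 2, x ≠ 1 → x = 0) _ hne,
      zero_add]
  obtain ⟨ω, hω, hwt⟩ := cs.exists_isReduced (w * t)
  rw [hwt] at hpar
  have := (cs.isRightInversion_of_mem_rightInvSeq hω
    (cs.mem_rightInvSeq_of_inversionParity hpar)).2
  rw [← hwt, mul_assoc, h.1.mul_self, mul_one] at this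
  exact (h.2.trans this).false

end SignRepresentation

theorem mem_rightInvSeq_of_isRightInversion {ω : List B} {t : W}
    (h : cs.IsRightInversion (π ω) t) : t ∈ cs.rightInvSeq ω := by
  classical
  exact cs.mem_rightInvSeq_of_inversionParity (cs.inversionParity_eq_one_of_isRightInversion h)

theorem eq_or_length_simple_mul_mul_simple {w : W} {i j : B} (hi : ℓ (s i * w) = ℓ w + 1)
    (hj : ℓ (w * s j) = ℓ w + 1) : s i * w = w * s j ∨ ℓ (s i * w * s j) = ℓ w + 2 := by
  rcases cs.length_simple_mul (w * s j) i with hlen | hlen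
  · right
    rw [mul_assoc]
    omega
  · left
    -- `s i` is a right inversion of `s j * w⁻¹`, so it occurs in the right inversion sequence of
    -- `j :: ω`; it cannot occur in that of `ω`, since `ℓ (w⁻¹ * s i) > ℓ w⁻¹`.
    obtain ⟨ω, hω, hw⟩ := cs.exists_isReduced w⁻¹
    have hinv : cs.IsRightInversion (π (j :: ω)) (s i) := by
      refine ⟨cs.isReflection_simple i, ?_⟩
      rw [wordProd_cons, ← hw, ← cs.length_inv, ← cs.length_inv (s j * w⁻¹), mul_inv_rev,
        mul_inv_rev, inv_inv, cs.inv_simple, cs.inv_simple]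
      omega
    rcases List.mem_cons.mp (cs.mem_rightInvSeq_of_isRightInversion hinv) with h | h
    · rw [h, ← hw, inv_inv]
      group
    · have := (cs.isRightInversion_of_mem_rightInvSeq hω h).2
      rw [← hw, ← cs.length_inv, mul_inv_rev, inv_inv, cs.inv_simple, cs.length_inv] at this
      omega

theorem length_simple_mul_mul_simple_of_ne {w : W} {i j : B} (h : ℓ (s i * w) = ℓ (w * s j))
    (hne : s i * w ≠ w * s j) : ℓ (s i * w * s j) = ℓ w + 2 ∨ ℓ (s i * w * s j) + 2 = ℓ w := by
  rcases cs.length_simple_mul w i with hi | hi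
  · exact .inl ((cs.eq_or_length_simple_mul_mul_simple hi (h ▸ hi)).resolve_left hne)
  · have hi' : ℓ (s i * (s i * w)) = ℓ (s i * w) + 1 := by
      rw [cs.simple_mul_simple_cancel_left]
      omega
    rcases cs.length_mul_simple (s i * w) j with hj | hj
    · rcases cs.eq_or_length_simple_mul_mul_simple hi' hj with heq | hlen
      · rw [cs.simple_mul_simple_cancel_left] at heq
        refine absurd ?_ hne
        conv_rhs => rw [heq, cs.simple_mul_simple_cancel_right]
      · rw [cs.simple_mul_simple_cancel_left] at hlen
        omega
    · right
      omega

theorem length_map_le (f : W →* W) (σ : B → B) (hf : ∀ i, f (s i) = s (σ i)) (w : W) :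
    ℓ (f w) ≤ ℓ w := by
  obtain ⟨ω, hω, rfl⟩ := cs.exists_isReduced w
  have : f (π ω) = π (ω.map σ) := by
    simp only [wordProd, map_list_prod, List.map_map]
    exact congrArg List.prod (List.map_congr_left fun i _ ↦ hf i)
  rw [this, hω.eq]
  exact (cs.length_wordProd_le _).trans (List.length_map _).le

theorem length_map (θ : W ≃* W) (σ : Equiv.Perm B) (hθ : ∀ i, θ (s i) = s (σ i)) (w : W) :
    ℓ (θ w) = ℓ w := by
  refine (cs.length_map_le θ σ hθ w).antisymm ?_
  have hθsymm (i : B) : θ.symm (s i) = s (σ.symm i) := by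
    rw [MulEquiv.symm_apply_eq, hθ, Equiv.apply_symm_apply]
  simpa using cs.length_map_le θ.symm σ.symm hθsymm (θ w)

end CoxeterSystem

theorem stmt1_general {B W : Type*} [Group W] {M : CoxeterMatrix B} (cs : CoxeterSystem M W)
    (θ : W ≃* W) (π : Equiv.Perm B)
    (hθS : ∀ i : B, θ (cs.simple i) = cs.simple (π i))
    (heven : ∀ u : W, θ u = u⁻¹ → Even (cs.length u))
    (u : W) (hu : θ u = u⁻¹) (i : B) :
    (cs.length (cs.simple i * u * θ (cs.simple i)) = cs.length u + 2 ∨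
      cs.length (cs.simple i * u * θ (cs.simple i)) + 2 = cs.length u) ∧
    cs.simple i * u * θ (cs.simple i) ≠ u := by
  have hθsu : θ (cs.simple i * u) = cs.simple (π i) * u⁻¹ := by rw [map_mul, hu, hθS]
  have hne : cs.simple i * u ≠ u * cs.simple (π i) := by
    intro h
    have htwisted : θ (cs.simple i * u) = (cs.simple i * u)⁻¹ := by
      rw [hθsu, h, mul_inv_rev, cs.inv_simple]
    obtain ⟨a, ha⟩ := heven _ htwisted
    obtain ⟨b, hb⟩ := heven u hu
    have := cs.length_simple_mul u i
    omega
  have hlen : cs.length (cs.simple i * u) = cs.length (u * cs.simple (π i)) := by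
    rw [← cs.length_map θ π hθS, hθsu, ← cs.length_inv, mul_inv_rev, inv_inv, cs.inv_simple]
  rw [hθS]
  refine ⟨cs.length_simple_mul_mul_simple_of_ne hlen hne, fun h ↦ hne ?_⟩
  conv_rhs => rw [← h, cs.simple_mul_simple_cancel_right]

/-- If `θ` is a diagram automorphism of a Coxeter group `W` commuting with no reflection,
and every twisted involution has even length, then for every twisted involution `u` and
simple reflection `sᵢ` the length of `sᵢ * u * θ(sᵢ)` is `ℓ(u) + 2` or `ℓ(u) - 2`;
in particular `sᵢ * u * θ(sᵢ) ≠ u`. -/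
theorem stmt1 {B W : Type*} [Group W] {M : CoxeterMatrix B} (cs : CoxeterSystem M W)
    (θ : W ≃* W) (π : Equiv.Perm B)
    (hθS : ∀ i : B, θ (cs.simple i) = cs.simple (π i))
    (hrefl : ∀ r : W, cs.IsReflection r → θ r ≠ r)
    (heven : ∀ u : W, θ u = u⁻¹ → Even (cs.length u))
    (u : W) (hu : θ u = u⁻¹) (i : B) :
    (cs.length (cs.simple i * u * θ (cs.simple i)) = cs.length u + 2 ∨
      cs.length (cs.simple i * u * θ (cs.simple i)) + 2 = cs.length u) ∧
    cs.simple i * u * θ (cs.simple i) ≠ u :=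
  stmt1_general cs θ π hθS heven u hu i
end

section
/- Let P be a projective 3-space PG(3, k) over a field k with |k| ≥ 4, and fix a line l. Consider the graph Ξ whose vertices are the points of P not on l, with two points adjacent iff the line joining them does not meet l. Then Ξ is connected of diameter at most 2. -/
/-!
A plane `⟨p, L⟩` through the line `L` and a point `p` off `L` is a proper subspace of `PG(3,k)`,
and no vector space is the union of two proper subspaces. So for points `p, q` off `L` there is
a point `r` lying neither on the plane `⟨p, L⟩` nor on `⟨q, L⟩`. By modularity of the subspace
lattice, a point `r` off the plane `⟨p, L⟩` spans with `p` a line missing `L`; hence `p ~ r ~ q`.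
-/

theorem IsAtom.sup_inf_eq_bot {α : Type*} [Lattice α] [OrderBot α] [IsModularLattice α]
    {p r w : α} (hp : IsAtom p) (hr : IsAtom r) (hpw : ¬ p ≤ w) (hr' : ¬ r ≤ p ⊔ w) :
    (p ⊔ r) ⊓ w = ⊥ := by
  have hjoin : (p ⊔ r) ⊓ (p ⊔ w) = p := by
    rw [sup_inf_assoc_of_le r le_sup_left, (hr.not_le_iff_disjoint.mp hr').eq_bot, sup_bot_eq]
  refine le_bot_iff.mp ?_
  calc (p ⊔ r) ⊓ w ≤ p ⊓ w :=
        le_inf ((inf_le_inf_left _ le_sup_right).trans hjoin.le) inf_le_right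
    _ = ⊥ := (hp.not_le_iff_disjoint.mp hpw).eq_bot

theorem Submodule.exists_notMem_and_notMem {R M : Type*} [Ring R] [AddCommGroup M] [Module R M]
    {A B : Submodule R M} (hA : A ≠ ⊤) (hB : B ≠ ⊤) : ∃ x, x ∉ A ∧ x ∉ B := by
  obtain ⟨a, ha⟩ := SetLike.exists_not_mem_of_ne_top A hA rfl
  obtain ⟨b, hb⟩ := SetLike.exists_not_mem_of_ne_top B hB rfl
  by_cases haB : a ∈ B
  · by_cases hbA : b ∈ A
    · exact ⟨a + b, fun h => ha ((A.add_mem_iff_left hbA).mp h),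
        fun h => hb ((B.add_mem_iff_right haB).mp h)⟩
    · exact ⟨b, hbA, hb⟩
  · exact ⟨a, ha, haB⟩

namespace Projectivization

open scoped LinearAlgebra.Projectivization

variable {K V : Type*} [DivisionRing K] [AddCommGroup V] [Module K V]

theorem isAtom_submodule (p : ℙ K V) : IsAtom p.submodule := by
  rw [submodule_eq]
  exact nonzero_span_atom _ p.rep_nonzero

theorem exists_not_le_and_not_le {A B : Submodule K V} (hA : A ≠ ⊤) (hB : B ≠ ⊤) :
    ∃ r : ℙ K V, ¬ r.submodule ≤ A ∧ ¬ r.submodule ≤ B := by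
  obtain ⟨x, hxA, hxB⟩ := Submodule.exists_notMem_and_notMem hA hB
  have hx : x ≠ 0 := fun h => hxA (h ▸ A.zero_mem)
  refine ⟨mk K x hx, ?_, ?_⟩ <;>
    rwa [submodule_mk, Submodule.span_singleton_le_iff_mem]

theorem submodule_sup_ne_top [FiniteDimensional K V] (p : ℙ K V) {W : Submodule K V}
    (hW : Module.finrank K W + 1 < Module.finrank K V) : p.submodule ⊔ W ≠ ⊤ := by
  intro htop
  have := Submodule.finrank_add_le_finrank_add_finrank p.submodule W
  rw [htop, finrank_top, finrank_submodule] at this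
  omega

theorem ne_of_not_le_sup {p r : ℙ K V} {W : Submodule K V}
    (hr : ¬ r.submodule ≤ p.submodule ⊔ W) : p ≠ r := by
  rintro rfl
  exact hr le_sup_left

theorem sup_inf_eq_bot_of_not_le_sup {p r : ℙ K V} {W : Submodule K V}
    (hp : ¬ p.submodule ≤ W) (hr : ¬ r.submodule ≤ p.submodule ⊔ W) :
    (p.submodule ⊔ r.submodule) ⊓ W = ⊥ :=
  p.isAtom_submodule.sup_inf_eq_bot r.isAtom_submodule hp hr

end Projectivization

theorem stmt13_general {k : Type*} [Field k]
    (L : Submodule k (Fin 4 → k)) (hL : Module.finrank k L = 2) :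
    let Adj : Projectivization k (Fin 4 → k) → Projectivization k (Fin 4 → k) → Prop :=
      fun p q => p ≠ q ∧ (p.submodule ⊔ q.submodule) ⊓ L = ⊥
    ∀ p q : Projectivization k (Fin 4 → k),
      ¬ p.submodule ≤ L → ¬ q.submodule ≤ L →
      p = q ∨ Adj p q ∨ ∃ r, Adj p r ∧ Adj r q := by
  intro Adj p q hp hq
  have hdim : Module.finrank k L + 1 < Module.finrank k (Fin 4 → k) := by
    simp [hL]
  obtain ⟨r, hrp, hrq⟩ := Projectivization.exists_not_le_and_not_le
    (p.submodule_sup_ne_top hdim) (q.submodule_sup_ne_top hdim)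
  refine Or.inr (Or.inr ⟨r, ⟨?_, ?_⟩, ?_, ?_⟩)
  · exact Projectivization.ne_of_not_le_sup hrp
  · exact Projectivization.sup_inf_eq_bot_of_not_le_sup hp hrp
  · exact (Projectivization.ne_of_not_le_sup hrq).symm
  · rw [sup_comm]
    exact Projectivization.sup_inf_eq_bot_of_not_le_sup hq hrq

/-- In `PG(3,k)` with `|k| ≥ 4`, fix a line `L`.  The graph on the points not on `L`, with
two points adjacent iff their joining line misses `L`, is connected of diameter at most 2. -/
theorem stmt13 {k : Type*} [Field k] (hk : 4 ≤ Cardinal.mk k)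
    (L : Submodule k (Fin 4 → k)) (hL : Module.finrank k L = 2) :
    let Adj : Projectivization k (Fin 4 → k) → Projectivization k (Fin 4 → k) → Prop :=
      fun p q => p ≠ q ∧ (p.submodule ⊔ q.submodule) ⊓ L = ⊥
    ∀ p q : Projectivization k (Fin 4 → k),
      ¬ p.submodule ≤ L → ¬ q.submodule ≤ L →
      p = q ∨ Adj p q ∨ ∃ r, Adj p r ∧ Adj r q :=
  stmt13_general L hL
end

section
/- Let V be a 4-dimensional vector space over a field k with |k| ≥ 4, and let φ be an involutory semilinear map on V (with respect to a field involution) inducing a fixed-point-free involution of the projective space PG(V). Consider the graph on all points of PG(V), where points p, q are adjacent iff p ≠ q and the line ⟨p,q⟩ is not φ-invariant. Then this graph is connected of diameter at most 2: any two non-adjacent distinct points p₁, p₂ are both adjacent to any point not on the φ-invariant line ⟨p₁, p₂⟩. -/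
/-!
If the line `⟨p, q⟩` is `φ`-invariant and `r` lies off it, then `⟨p, r⟩` cannot be
`φ`-invariant: writing `φ u = a u + b w` with `u` spanning `p` and `w` spanning `r`, either
`b = 0` and `p` is a fixed point of `φ`, or `w = b⁻¹ (φ u - a u)` lies on `⟨p, q⟩`.
Since `dim V > 2`, a point off `⟨p, q⟩` always exists, which gives diameter at most 2.
-/

open Module Submodule
open scoped LinearAlgebra.Projectivization

section

variable {k V : Type*} [Field k] [AddCommGroup V] [Module k V]

theorem not_forall_map_mem_span_pair {φ : V → V} (hφ : ∀ v ≠ 0, ¬ ∃ c : k, φ v = c • v)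
    {L : Submodule k V} (hL : ∀ v ∈ L, φ v ∈ L) {u w : V} (hu : u ∈ L) (hu0 : u ≠ 0)
    (hw : w ∉ L) : ¬ ∀ v ∈ span k {u, w}, φ v ∈ span k {u, w} := by
  intro h
  obtain ⟨a, b, hab⟩ := mem_span_pair.1 (h u (subset_span (by simp)))
  by_cases hb : b = 0
  · exact hφ u hu0 ⟨a, by simpa [hb] using hab.symm⟩
  · refine hw ?_
    have : b • w ∈ L := by
      rw [← add_sub_cancel_left (a • u) (b • w), hab]
      exact L.sub_mem (hL u hu) (L.smul_mem a hu)
    simpa [hb] using L.smul_mem b⁻¹ this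

namespace Projectivization

theorem submodule_sup_eq_span_pair (p q : ℙ k V) :
    p.submodule ⊔ q.submodule = span k {p.rep, q.rep} := by
  rw [p.submodule_eq, q.submodule_eq, span_insert]

theorem finrank_submodule_sup_le (p q : ℙ k V) :
    finrank k ↥(p.submodule ⊔ q.submodule) ≤ 2 := by
  have := finrank_add_le_finrank_add_finrank p.submodule q.submodule
  rw [p.finrank_submodule, q.finrank_submodule] at this
  omega

theorem exists_not_le_submodule_sup (hV : 2 < finrank k V) (p q : ℙ k V) :
    ∃ r : ℙ k V, ¬ r.submodule ≤ p.submodule ⊔ q.submodule := by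
  obtain ⟨v, hv⟩ : ∃ v, v ∉ p.submodule ⊔ q.submodule := by
    by_contra! h
    have := p.finrank_submodule_sup_le q
    rw [eq_top_iff'.2 h, finrank_top] at this
    omega
  refine ⟨mk k v fun h => hv (h ▸ zero_mem _), ?_⟩
  rwa [submodule_mk, span_singleton_le_iff_mem]

theorem not_forall_map_mem_submodule_sup {φ : V → V}
    (hφ : ∀ v ≠ 0, ¬ ∃ c : k, φ v = c • v) {L : Submodule k V} (hL : ∀ v ∈ L, φ v ∈ L)
    {p r : ℙ k V} (hp : p.submodule ≤ L) (hr : ¬ r.submodule ≤ L) :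
    ¬ ∀ v ∈ p.submodule ⊔ r.submodule, φ v ∈ p.submodule ⊔ r.submodule := by
  rw [submodule_sup_eq_span_pair]
  refine not_forall_map_mem_span_pair hφ hL (hp ?_) p.rep_nonzero ?_
  · rw [p.submodule_eq]
    exact mem_span_singleton_self _
  · rwa [r.submodule_eq, span_singleton_le_iff_mem] at hr

end Projectivization

end

theorem stmt14_general {k V : Type*} [Field k] [AddCommGroup V] [Module k V]
    (hdim : Module.finrank k V = 4)
    (φ : V → V)
    (hfpf : ∀ v : V, v ≠ 0 → ¬ ∃ c : k, φ v = c • v) :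
    let Bad : Submodule k V → Prop := fun L => ∀ v ∈ L, φ v ∈ L
    let Adj : Projectivization k V → Projectivization k V → Prop :=
      fun p q => p ≠ q ∧ ¬ Bad (p.submodule ⊔ q.submodule)
    (∀ p q : Projectivization k V, p = q ∨ Adj p q ∨ ∃ r, Adj p r ∧ Adj r q) ∧
    (∀ p q : Projectivization k V, p ≠ q → ¬ Adj p q →
      ∀ r : Projectivization k V, ¬ r.submodule ≤ p.submodule ⊔ q.submodule →
        Adj p r ∧ Adj q r) := by
  intro Bad Adj
  have adj_of_le_of_not_le : ∀ L, Bad L → ∀ p r : ℙ k V,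
      p.submodule ≤ L → ¬ r.submodule ≤ L → Adj p r := fun L hL p r hp hr =>
    ⟨fun hpr => hr (hpr ▸ hp),
      Projectivization.not_forall_map_mem_submodule_sup hfpf hL hp hr⟩
  have adj_off_line : ∀ p q : ℙ k V, p ≠ q → ¬ Adj p q →
      ∀ r : ℙ k V, ¬ r.submodule ≤ p.submodule ⊔ q.submodule → Adj p r ∧ Adj q r := by
    intro p q hpq hnadj r hr
    have hbad : Bad (p.submodule ⊔ q.submodule) := not_not.1 fun h => hnadj ⟨hpq, h⟩
    exact ⟨adj_of_le_of_not_le _ hbad p r le_sup_left hr,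
      adj_of_le_of_not_le _ hbad q r le_sup_right hr⟩
  refine ⟨fun p q => ?_, adj_off_line⟩
  by_cases hpq : p = q
  · exact .inl hpq
  by_cases hadj : Adj p q
  · exact .inr (.inl hadj)
  obtain ⟨r, hr⟩ := Projectivization.exists_not_le_submodule_sup (by omega) p q
  obtain ⟨hpr, hqr, hrq_good⟩ := adj_off_line p q hpq hadj r hr
  exact .inr (.inr ⟨r, hpr, Ne.symm hqr, by rwa [sup_comm]⟩)

/-- Let `V` be 4-dimensional over a field `k` with `|k| ≥ 4`, and `φ` an involutory
semilinear map on `V` inducing a fixed-point-free involution of `PG(V)`.  The graph on the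
points of `PG(V)`, with `p ~ q` iff `p ≠ q` and the line `⟨p,q⟩` is not `φ`-invariant, is
connected of diameter at most 2; indeed any two non-adjacent distinct points are both
adjacent to every point off the (φ-invariant) line through them. -/
theorem stmt14 {k V : Type*} [Field k] [AddCommGroup V] [Module k V]
    (hdim : Module.finrank k V = 4) (hk : 4 ≤ Cardinal.mk k)
    (α : k ≃+* k) (hα2 : ∀ x, α (α x) = x)
    (φ : V → V)
    (hadd : ∀ u v, φ (u + v) = φ u + φ v)
    (hsmul : ∀ (c : k) (v : V), φ (c • v) = α c • φ v)
    (hsq : ∃ c : k, c ≠ 0 ∧ ∀ v, φ (φ v) = c • v)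
    (hfpf : ∀ v : V, v ≠ 0 → ¬ ∃ c : k, φ v = c • v) :
    let Bad : Submodule k V → Prop := fun L => ∀ v ∈ L, φ v ∈ L
    let Adj : Projectivization k V → Projectivization k V → Prop :=
      fun p q => p ≠ q ∧ ¬ Bad (p.submodule ⊔ q.submodule)
    (∀ p q : Projectivization k V, p = q ∨ Adj p q ∨ ∃ r, Adj p r ∧ Adj r q) ∧
    (∀ p q : Projectivization k V, p ≠ q → ¬ Adj p q →
      ∀ r : Projectivization k V, ¬ r.submodule ≤ p.submodule ⊔ q.submodule →
        Adj p r ∧ Adj q r) :=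
  stmt14_general hdim φ hfpf
end

section
/- Let k be a field, A = k[t,t⁻¹], and let ε₁ : SL_{2n}(A) → SL_{2n}(k) be evaluation at t = 1. With β and G^τ as above, ε₁(G^τ) is contained in the special orthogonal group SO⁺_{2n}(k) of the symmetric bilinear form with Gram matrix [[0,Iₙ],[Iₙ,0]]. -/
/-! Preserving the σ-sesquilinear form with Gram matrix `B` means exactly `gᵀ B σ(g) = B`.
Evaluation at `t = 1` sends `B` to `J`, and it absorbs `σ` because `ε ∘ σ` and `ε` are ring maps
that agree on constants and both send `t` to `1`. Applying `ε` entrywise to the identity then gives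
`ε(g)ᵀ J ε(g) = J`, while `det ε(g) = ε(det g) = 1`. -/

open Matrix LaurentPolynomial

section SesqForm

variable {R ι : Type*} [CommSemiring R] [Fintype ι]

def sesqForm (σ : R →+* R) (B : Matrix ι ι R) (u v : ι → R) : R :=
  ∑ i, ∑ j, u i * B i j * σ (v j)

variable (σ : R →+* R) (B : Matrix ι ι R)

theorem sesqForm_eq_dotProduct_mulVec (u v : ι → R) :
    sesqForm σ B u v = u ⬝ᵥ B *ᵥ (σ ∘ v) := by
  rw [dot_mulVec_eq_sum_sum, Finset.sum_comm]
  rfl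

variable [DecidableEq ι]

theorem sesqForm_mulVec_mulVec (g : Matrix ι ι R) (u v : ι → R) :
    sesqForm σ B (g *ᵥ u) (g *ᵥ v) = sesqForm σ (gᵀ * B * σ.mapMatrix g) u v := by
  have hσ : σ ∘ (g *ᵥ v) = σ.mapMatrix g *ᵥ (σ ∘ v) := funext (σ.map_mulVec g v)
  rw [sesqForm_eq_dotProduct_mulVec, sesqForm_eq_dotProduct_mulVec, hσ, ← vecMul_transpose,
    ← dotProduct_mulVec, mulVec_mulVec, mulVec_mulVec, Matrix.mul_assoc]

theorem sesqForm_single_one (a b : ι) :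
    sesqForm σ B (Pi.single a 1) (Pi.single b 1) = B a b := by
  have hσ : σ ∘ Pi.single b 1 = Pi.single b 1 := by
    ext j
    simp [Pi.single_apply, apply_ite σ]
  rw [sesqForm_eq_dotProduct_mulVec, hσ, mulVec_single_one, single_one_dotProduct, col_apply]

theorem transpose_mul_mul_mapMatrix_eq_of_sesqForm_mulVec {g : Matrix ι ι R}
    (hg : ∀ u v, sesqForm σ B (g *ᵥ u) (g *ᵥ v) = sesqForm σ B u v) :
    gᵀ * B * σ.mapMatrix g = B := by
  ext a b
  rw [← sesqForm_single_one σ (gᵀ * B * σ.mapMatrix g), ← sesqForm_mulVec_mulVec, hg,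
    sesqForm_single_one]

end SesqForm

section Laurent

variable {R S : Type*} [CommSemiring R] [Semiring S]

theorem LaurentPolynomial.map_T_eq_one {f : R[T;T⁻¹] →+* S} (hf : f (T 1) = 1) (m : ℤ) :
    f (T m) = 1 := by
  have hnat (n : ℕ) : f (T n) = 1 := by
    rw [← mul_one (n : ℤ), ← T_pow, map_pow, hf, one_pow]
  obtain ⟨n, rfl | rfl⟩ := Int.eq_nat_or_neg m
  · exact hnat n
  · calc f (T (-n)) = f (T (-n)) * f (T n) := by rw [hnat, mul_one]
      _ = 1 := by rw [← map_mul, ← T_add, neg_add_cancel, T_zero, map_one]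

theorem LaurentPolynomial.ringHom_ext_of_map_T_one {f g : R[T;T⁻¹] →+* S}
    (hC : ∀ a, f (C a) = g (C a)) (hf : f (T 1) = 1) (hg : g (T 1) = 1) : f = g := by
  refine RingHom.ext fun p => ?_
  induction p using LaurentPolynomial.induction_on' with
  | add p q hp hq => rw [map_add, map_add, hp, hq]
  | C_mul_T m a => rw [map_mul, map_mul, hC, map_T_eq_one hf, map_T_eq_one hg]

end Laurent

theorem stmt16_general {k : Type*} [Field k] (n : ℕ)
    (σ : LaurentPolynomial k →+* LaurentPolynomial k)
    (hσC : ∀ x : k, σ (LaurentPolynomial.C x) = LaurentPolynomial.C x)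
    (hσT : ∀ m : ℤ, σ (T m : LaurentPolynomial k) = T (-m))
    (ε : LaurentPolynomial k →+* k)
    (hεT : ε (T 1 : LaurentPolynomial k) = 1) :
    let B : Matrix (Fin n ⊕ Fin n) (Fin n ⊕ Fin n) (LaurentPolynomial k) :=
      Matrix.fromBlocks 0 1
        ((T 1 : LaurentPolynomial k) • (1 : Matrix (Fin n) (Fin n) (LaurentPolynomial k))) 0
    let β : (Fin n ⊕ Fin n → LaurentPolynomial k) →
        (Fin n ⊕ Fin n → LaurentPolynomial k) → LaurentPolynomial k :=
      fun u v => ∑ i, ∑ j, u i * B i j * σ (v j)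
    let J : Matrix (Fin n ⊕ Fin n) (Fin n ⊕ Fin n) k :=
      Matrix.fromBlocks 0 1 1 0
    ∀ g : Matrix (Fin n ⊕ Fin n) (Fin n ⊕ Fin n) (LaurentPolynomial k),
      g.det = 1 → (∀ x y, β (g.mulVec x) (g.mulVec y) = β x y) →
      (ε.mapMatrix g).det = 1 ∧ (ε.mapMatrix g)ᵀ * J * ε.mapMatrix g = J := by
  intro B β J g hdet hβ
  have hεσ : ε.comp σ = ε :=
    ringHom_ext_of_map_T_one (fun a => by simp [hσC]) (by simp [hσT, map_T_eq_one hεT]) hεT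
  have hB : ε.mapMatrix B = J := by
    simp [B, J, fromBlocks_map, Matrix.map_smul' ε _ _ (map_mul ε), hεT]
  have hg : gᵀ * B * σ.mapMatrix g = B := transpose_mul_mul_mapMatrix_eq_of_sesqForm_mulVec σ B hβ
  have hεσg : ε.mapMatrix (σ.mapMatrix g) = ε.mapMatrix g := by
    rw [← RingHom.comp_apply, RingHom.mapMatrix_comp, hεσ]
  refine ⟨by rw [← RingHom.map_det, hdet, map_one], ?_⟩
  calc (ε.mapMatrix g)ᵀ * J * ε.mapMatrix g = ε.mapMatrix (gᵀ * B * σ.mapMatrix g) := by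
        rw [map_mul, map_mul, hB, hεσg, RingHom.mapMatrix_apply, RingHom.mapMatrix_apply,
          transpose_map]
    _ = J := by rw [hg, hB]

/-- Let `A = k[t,t⁻¹]` and `ε₁ : SL_{2n}(A) → SL_{2n}(k)` the evaluation `t ↦ 1`.  If
`g ∈ SL_{2n}(A)` preserves the σ-sesquilinear form `β` with Gram matrix
`B = [[0,Iₙ],[t·Iₙ,0]]` (i.e. `g ∈ G^τ`), then `ε₁(g)` lies in the special orthogonal
group `SO⁺_{2n}(k)` of the symmetric bilinear form `[[0,Iₙ],[Iₙ,0]]`. -/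
theorem stmt16 {k : Type*} [Field k] (n : ℕ) (hn : 0 < n)
    (σ : LaurentPolynomial k →+* LaurentPolynomial k)
    (hσC : ∀ x : k, σ (LaurentPolynomial.C x) = LaurentPolynomial.C x)
    (hσT : ∀ m : ℤ, σ (T m : LaurentPolynomial k) = T (-m))
    (ε : LaurentPolynomial k →+* k)
    (hεC : ∀ x : k, ε (LaurentPolynomial.C x) = x)
    (hεT : ε (T 1 : LaurentPolynomial k) = 1) :
    let B : Matrix (Fin n ⊕ Fin n) (Fin n ⊕ Fin n) (LaurentPolynomial k) :=
      Matrix.fromBlocks 0 1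
        ((T 1 : LaurentPolynomial k) • (1 : Matrix (Fin n) (Fin n) (LaurentPolynomial k))) 0
    let β : (Fin n ⊕ Fin n → LaurentPolynomial k) →
        (Fin n ⊕ Fin n → LaurentPolynomial k) → LaurentPolynomial k :=
      fun u v => ∑ i, ∑ j, u i * B i j * σ (v j)
    let J : Matrix (Fin n ⊕ Fin n) (Fin n ⊕ Fin n) k :=
      Matrix.fromBlocks 0 1 1 0
    ∀ g : Matrix (Fin n ⊕ Fin n) (Fin n ⊕ Fin n) (LaurentPolynomial k),
      g.det = 1 → (∀ x y, β (g.mulVec x) (g.mulVec y) = β x y) →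
      (ε.mapMatrix g).det = 1 ∧ (ε.mapMatrix g)ᵀ * J * ε.mapMatrix g = J :=
  stmt16_general n σ hσC hσT ε hεT
end
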